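/- arXiv:2211.04994 — 5 statements merged into one kernel-verified Lean document; each statement's English description precedes it below -/
import Mathlib

section
/- Let G be a connected graph with spanning tree T that is a path v_0 - v_1 - ... - v_n (so tree edges are linearly ordered), and let k be the minimum cut value of G. Fix a tree edge t. Sort the edges covering t by the position of their right endpoint, and let e_1, ..., e_k be the first k such edges with right endpoints u_1, ..., u_k. Then any tree edge t' strictly to the right of u_k satisfies Cut(t,t') > k. -/
/-- In the path-tree model (tree is the path `v_0 - v_1 - ... - v_n`, tree edge `j`
joins `v_{j-1}` and `v_j`), a graph edge `e` with left endpoint `l e` and right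
endpoint `r e` covers the tree edge `j` iff it spans it. -/
def pcovers {E : Type*} (l r : E → ℕ) (e : E) (j : ℕ) : Prop :=
  l e < j ∧ j ≤ r e

theorem Finset.card_lt_ncard_of_subset_of_mem {α : Type*} {s : Set α} {F : Finset α} {a : α}
    (hF : (F : Set α) ⊆ s) (ha : a ∈ s) (haF : a ∉ F) (hs : s.Finite := by toFinite_tac) :
    F.card < s.ncard := by
  rw [← Set.ncard_coe_finset]
  exact Set.ncard_lt_ncard ((Set.ssubset_iff_of_subset hF).2 ⟨a, ha, haF⟩) hs

section PathCover

variable {E : Type*} (l r : E → ℕ) {e : E} {j : ℕ}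

theorem not_pcovers_of_right_lt (h : r e < j) : ¬ pcovers l r e j :=
  fun hcov ↦ (h.trans_le hcov.2).false

theorem not_pcovers_of_le_left (h : j ≤ l e) : ¬ pcovers l r e j :=
  fun hcov ↦ (h.trans_lt hcov.1).false

theorem pcovers_self_of_tree_edge (hj : 0 < j) (hl : l e = j - 1) (hr : r e = j) :
    pcovers l r e j :=
  ⟨by omega, hr.ge⟩

end PathCover

theorem stmt_5_general {E : Type*} [Fintype E] (l r : E → ℕ) (n k τ u : ℕ)
    (hk : 1 ≤ k)
    -- every tree edge is itself an edge of the graph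
    (htree : ∀ j, 1 ≤ j → j ≤ n → ∃ e : E, l e = j - 1 ∧ r e = j)
    (F : Finset E) (hFcard : F.card = k)
    (hFcov : ∀ e ∈ F, pcovers l r e τ)
    (hFr : ∀ e ∈ F, r e ≤ u)
    (j' : ℕ) (hj'l : u < j') (hj'n : j' ≤ n) :
    k < ({e : E | Xor' (pcovers l r e τ) (pcovers l r e j')}).ncard := by
  obtain ⟨f, hf⟩ : F.Nonempty := Finset.card_pos.mp (by omega)
  have hτu : τ ≤ u := (hFcov f hf).2.trans (hFr f hf)
  obtain ⟨e', hl', hr'⟩ := htree j' (by omega) hj'n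
  rw [← hFcard]
  refine Finset.card_lt_ncard_of_subset_of_mem (a := e') ?_ ?_ ?_
  · intro e he
    exact Or.inl ⟨hFcov e he, not_pcovers_of_right_lt l r ((hFr e he).trans_lt hj'l)⟩
  · exact Or.inr ⟨pcovers_self_of_tree_edge l r (by omega) hl' hr',
      not_pcovers_of_le_left l r (by omega)⟩
  · exact fun he' ↦ absurd (hFr e' he') (by omega)

/-- `T` is a path with tree edges `1..n`. Fix a tree edge `τ`, and
suppose the first `k` edges covering `τ` (sorted by right endpoint) form a set `F`
of `k` edges whose right endpoints are all `≤ u` (`u = u_k` is the `k`-th sorted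
right endpoint). Then every tree edge `j'` strictly to the right of `u` satisfies
`Cut(τ, j') > k`, where `Cut` counts the graph edges covering exactly one of the two. -/
theorem stmt_5 {E : Type*} [Fintype E] (l r : E → ℕ) (n k τ u : ℕ)
    (hτ1 : 1 ≤ τ) (hτn : τ ≤ n) (hk : 1 ≤ k)
    -- every tree edge is itself an edge of the graph
    (htree : ∀ j, 1 ≤ j → j ≤ n → ∃ e : E, l e = j - 1 ∧ r e = j)
    (F : Finset E) (hFcard : F.card = k)
    (hFcov : ∀ e ∈ F, pcovers l r e τ)
    (hFr : ∀ e ∈ F, r e ≤ u)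
    (j' : ℕ) (hj'l : u < j') (hj'n : j' ≤ n) :
    k < ({e : E | Xor' (pcovers l r e τ) (pcovers l r e j')}).ncard :=
  stmt_5_general l r n k τ u hk htree F hFcard hFcov hFr j' hj'l hj'n
end

section
/- Let G be a connected graph whose spanning tree T is a path, with minimum cut value k. Fix a tree edge t, sort the edges covering t by their right endpoint (closest to t first), and let u_1, ..., u_k be the right endpoints of the first k such edges. For 1 ≤ i ≤ k−1, let S_i be the set of tree edges in the subpath between u_i and u_{i+1}. Then for every tree edge t' ∈ S_i: Cut(t,t') = k if and only if Cov(t') = Cov(t) + k − 2i. -/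
/-!
Let `A` and `B` be the sets of edges covering `τ` and `j'`. Then `Cut(τ, j') = |A ∆ B|`, and
`|A ∆ B| + 2 |A ∩ B| = |A| + |B|`. An edge covering `τ` has its right endpoint either `≤ u_i` or
`≥ u_{i+1} ≥ j'`, and in the latter case it covers `j'`; so `A \ B` consists of exactly the `i`
edges with right endpoint `≤ u_i`, whence `|A ∩ B| = |A| - i` and `Cut(τ, j') = |B| - |A| + 2i`.
-/

open scoped symmDiff

theorem Set.ncard_symmDiff_add_two_mul_ncard_inter {α : Type*} (s t : Set α)
    (hs : s.Finite := by toFinite_tac) (ht : t.Finite := by toFinite_tac) :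
    (s ∆ t).ncard + 2 * (s ∩ t).ncard = s.ncard + t.ncard := by
  rw [Set.symmDiff_def, Set.ncard_union_eq disjoint_sdiff_sdiff hs.sdiff ht.sdiff]
  have hs' := Set.ncard_inter_add_ncard_sdiff_eq_ncard s t hs
  have ht' := Set.ncard_inter_add_ncard_sdiff_eq_ncard t s ht
  rw [Set.inter_comm] at ht'
  omega

theorem setOf_xor_eq_symmDiff {α : Type*} (p q : α → Prop) :
    {a | Xor' (p a) (q a)} = {a | p a} ∆ {a | q a} :=
  Set.ext fun _ => Iff.rfl

theorem setOf_pcovers_sdiff_setOf_pcovers {E : Type*} (l r : E → ℕ) (τ ui ui1 j' : ℕ)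
    (hτui : τ ≤ ui) (h2 : ∀ e : E, pcovers l r e τ → ¬ (ui < r e ∧ r e < ui1))
    (hj'l : ui < j') (hj'r : j' ≤ ui1) :
    {e | pcovers l r e τ} \ {e | pcovers l r e j'} = {e | pcovers l r e τ ∧ r e ≤ ui} := by
  ext e
  have := h2 e
  simp only [Set.mem_sdiff, Set.mem_ofPred_eq, pcovers] at this ⊢
  omega

theorem stmt_6_general {E : Type*} [Fintype E] (l r : E → ℕ) (k i τ ui ui1 : ℕ)
    (hτui : τ ≤ ui)
    (h1 : ({e : E | pcovers l r e τ ∧ r e ≤ ui}).ncard = i)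
    (h2 : ∀ e : E, pcovers l r e τ → ¬ (ui < r e ∧ r e < ui1))
    (j' : ℕ) (hj'l : ui < j') (hj'r : j' ≤ ui1) :
    ({e : E | Xor' (pcovers l r e τ) (pcovers l r e j')}).ncard = k ↔
      (({e : E | pcovers l r e j'}).ncard : ℤ)
        = (({e : E | pcovers l r e τ}).ncard : ℤ) + (k : ℤ) - 2 * (i : ℤ) := by
  rw [setOf_xor_eq_symmDiff]
  set A := {e : E | pcovers l r e τ}
  set B := {e : E | pcovers l r e j'}
  have hcut := Set.ncard_symmDiff_add_two_mul_ncard_inter A B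
  have hA := Set.ncard_inter_add_ncard_sdiff_eq_ncard A B
  rw [setOf_pcovers_sdiff_setOf_pcovers l r τ ui ui1 j' hτui h2 hj'l hj'r, h1] at hA
  omega

/-- `T` is a path, `k` the minimum cut value. Fix a tree edge `τ`; the
edges covering `τ` are sorted by right endpoint, `ui = u_i` and `ui1 = u_{i+1}` being
the `i`-th and `(i+1)`-st sorted right endpoints (so exactly `i` edges covering `τ`
have right endpoint `≤ u_i`, and none has right endpoint strictly between `u_i` and
`u_{i+1}`). Then for every tree edge `j'` in the segment `S_i` between `u_i` and
`u_{i+1}`: `Cut(τ, j') = k` iff `Cov(j') = Cov(τ) + k - 2i`. -/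
theorem stmt_6 {E : Type*} [Fintype E] (l r : E → ℕ) (k i τ ui ui1 : ℕ)
    (hτui : τ ≤ ui) (hui : ui ≤ ui1)
    (h1 : ({e : E | pcovers l r e τ ∧ r e ≤ ui}).ncard = i)
    (h2 : ∀ e : E, pcovers l r e τ → ¬ (ui < r e ∧ r e < ui1))
    (j' : ℕ) (hj'l : ui < j') (hj'r : j' ≤ ui1) :
    ({e : E | Xor' (pcovers l r e τ) (pcovers l r e j')}).ncard = k ↔
      (({e : E | pcovers l r e j'}).ncard : ℤ)
        = (({e : E | pcovers l r e τ}).ncard : ℤ) + (k : ℤ) - 2 * (i : ℤ) :=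
  stmt_6_general l r k i τ ui ui1 hτui h1 h2 j' hj'l hj'r
end

section
/- Let G be a connected graph whose spanning tree T is a path, with minimum cut value k. Fix a tree edge t, and define segments S_1,...,S_{k-1} to the right of t as in the succinct-representation construction (S_i between the i-th and (i+1)-st sorted right endpoints of edges covering t). Then for every tree edge t' ∈ S_i we have Cov(t') ≥ Cov(t) + k − 2i. -/
open scoped symmDiff

theorem Set.ncard_eq_ncard_add_ncard_symmDiff_sub {α : Type*} {A B : Set α}
    (hA : A.Finite) (hB : B.Finite) :
    (B.ncard : ℤ) = A.ncard + (A ∆ B).ncard - 2 * (A \ B).ncard := by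
  have hA_split := Set.ncard_inter_add_ncard_sdiff_eq_ncard A B hA
  have hB_split := Set.ncard_inter_add_ncard_sdiff_eq_ncard B A hB
  have h_symmDiff : (A ∆ B).ncard = (A \ B).ncard + (B \ A).ncard :=
    Set.ncard_union_eq disjoint_sdiff_sdiff hA.sdiff hB.sdiff
  rw [Set.inter_comm] at hB_split
  omega

theorem pcovers_iff_lt_of_pcovers {E : Type*} {l r : E → ℕ} {τ ui ui1 j' : ℕ}
    (hτui : τ ≤ ui) (hgap : ∀ e : E, pcovers l r e τ → ¬ (ui < r e ∧ r e < ui1))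
    (hj'l : ui < j') (hj'r : j' ≤ ui1) {e : E} (he : pcovers l r e τ) :
    pcovers l r e j' ↔ ui < r e := by
  refine ⟨fun hj' => hj'l.trans_le hj'.2, fun hr => ⟨?_, ?_⟩⟩
  · exact he.1.trans_le (hτui.trans hj'l.le)
  · exact hj'r.trans (not_lt.1 fun h => hgap e he ⟨hr, h⟩)

theorem stmt_7_general {E : Type*} [Fintype E] (l r : E → ℕ) (k i τ ui ui1 : ℕ)
    (hτui : τ ≤ ui)
    (h1 : ({e : E | pcovers l r e τ ∧ r e ≤ ui}).ncard = i)
    (h2 : ∀ e : E, pcovers l r e τ → ¬ (ui < r e ∧ r e < ui1))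
    (j' : ℕ) (hj'l : ui < j') (hj'r : j' ≤ ui1)
    -- k is the minimum cut value, so the 2-respecting cut {τ, j'} has value ≥ k
    (hmin : k ≤ ({e : E | Xor' (pcovers l r e τ) (pcovers l r e j')}).ncard) :
    (({e : E | pcovers l r e τ}).ncard : ℤ) + (k : ℤ) - 2 * (i : ℤ)
      ≤ (({e : E | pcovers l r e j'}).ncard : ℤ) := by
  set A := {e : E | pcovers l r e τ}
  set B := {e : E | pcovers l r e j'}
  have h_diff : {e : E | pcovers l r e τ ∧ r e ≤ ui} = A \ B :=
    Set.ext fun e => and_congr_right fun he =>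
      not_lt.symm.trans (not_congr (pcovers_iff_lt_of_pcovers hτui h2 hj'l hj'r he)).symm
  rw [h_diff] at h1
  replace hmin : k ≤ (A ∆ B).ncard := hmin
  have h_count := Set.ncard_eq_ncard_add_ncard_symmDiff_sub A.toFinite B.toFinite
  omega

/-- same setup as the path-case succinct representation (`ui = u_i` and
`ui1 = u_{i+1}` consecutive sorted right endpoints of edges covering `τ`), and `k` is
the minimum cut value of `G`, so `Cut(τ,j') ≥ k`. Then for every tree edge `j'` in
the segment `S_i`: `Cov(j') ≥ Cov(τ) + k - 2i`. -/
theorem stmt_7 {E : Type*} [Fintype E] (l r : E → ℕ) (k i τ ui ui1 : ℕ)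
    (hτui : τ ≤ ui) (hui : ui ≤ ui1)
    (h1 : ({e : E | pcovers l r e τ ∧ r e ≤ ui}).ncard = i)
    (h2 : ∀ e : E, pcovers l r e τ → ¬ (ui < r e ∧ r e < ui1))
    (j' : ℕ) (hj'l : ui < j') (hj'r : j' ≤ ui1)
    -- k is the minimum cut value, so the 2-respecting cut {τ, j'} has value ≥ k
    (hmin : k ≤ ({e : E | Xor' (pcovers l r e τ) (pcovers l r e j')}).ncard) :
    (({e : E | pcovers l r e τ}).ncard : ℤ) + (k : ℤ) - 2 * (i : ℤ)
      ≤ (({e : E | pcovers l r e j'}).ncard : ℤ) :=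
  stmt_7_general l r k i τ ui ui1 hτui h1 h2 j' hj'l hj'r hmin
end

section
/- Let G be a connected graph with spanning tree T and minimum cut value k, and let t, t' be orthogonal tree edges (neither lies on the root-to-leaf path of the other) such that {t,t'} is a minimum 2-respecting cut, i.e., Cut(t,t') = k. Then there exists an edge of G with one endpoint in the subtree T_t below t and the other endpoint in the subtree T_{t'} below t'. -/
/-! If no edge covered both `t` and `t'`, the cut would count every covering edge:
`Cut(t,t') = Cov(t) + Cov(t') ≥ 2k > k`. An edge covering both has an endpoint in each of
the disjoint subtrees, hence joins them. -/

open scoped symmDiff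

namespace Set

theorem inter_nonempty_of_ncard_symmDiff_lt {α : Type*} {s t : Set α} (hs : s.Finite)
    (ht : t.Finite) (h : (s ∆ t).ncard < s.ncard + t.ncard) : (s ∩ t).Nonempty := by
  by_contra hempty
  have hdisj : Disjoint s t :=
    disjoint_iff_inter_eq_empty.mpr (not_nonempty_iff_eq_empty.mp hempty)
  rw [hdisj.symmDiff_eq_sup] at h
  exact h.ne (ncard_union_eq hdisj hs ht)

end Set

theorem mem_and_mem_or_of_disjoint {V : Type*} {A B : Set V} {u v : V} (hdisj : Disjoint A B)
    (hA : u ∈ A ∨ v ∈ A) (hB : u ∈ B ∨ v ∈ B) : (u ∈ A ∧ v ∈ B) ∨ (u ∈ B ∧ v ∈ A) := by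
  have hAB := Set.disjoint_left.mp hdisj
  rcases hA with huA | hvA <;> rcases hB with huB | hvB
  · exact absurd huB (hAB huA)
  · exact .inl ⟨huA, hvB⟩
  · exact .inr ⟨huB, hvA⟩
  · exact absurd hvB (hAB hvA)

/-- Let `t, t'` be orthogonal tree edges, with vertex-disjoint subtrees
`A = T_t` and `B = T_{t'}` below them (so every edge covering `t` has an endpoint in
`A`, and every edge covering `t'` has an endpoint in `B`). If `{t,t'}` is a minimum
2-respecting cut, i.e. `Cut(t,t') = k` where `k ≥ 1` is the minimum cut value (so
also `Cov(t) ≥ k` and `Cov(t') ≥ k`), then some edge of the graph has one endpoint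
in `T_t` and the other in `T_{t'}`. Edges are a finite type `E` with endpoint maps
`x, y`, and `Cut(t,t')` counts the edges covering exactly one of `t, t'`. -/
theorem stmt_8 {E V β : Type*} [Fintype E] (x y : E → V) (covers : E → β → Prop)
    (t t' : β) (A B : Set V) (hdisj : Disjoint A B) (k : ℕ) (hk : 1 ≤ k)
    (hA : ∀ e : E, covers e t → x e ∈ A ∨ y e ∈ A)
    (hB : ∀ e : E, covers e t' → x e ∈ B ∨ y e ∈ B)
    (hcovt : k ≤ ({e : E | covers e t}).ncard)
    (hcovt' : k ≤ ({e : E | covers e t'}).ncard)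
    (hcut : ({e : E | Xor' (covers e t) (covers e t')}).ncard = k) :
    ∃ e : E, (x e ∈ A ∧ y e ∈ B) ∨ (x e ∈ B ∧ y e ∈ A) := by
  have hcut_eq : ({e : E | covers e t} ∆ {e : E | covers e t'}).ncard = k := hcut
  obtain ⟨e, he, he'⟩ := Set.inter_nonempty_of_ncard_symmDiff_lt (Set.toFinite {e | covers e t})
    (Set.toFinite {e | covers e t'}) (by omega)
  exact ⟨e, mem_and_mem_or_of_disjoint hdisj (hA e he) (hB e he')⟩
end

section
/- Let k ≥ 1 be an integer, let i = ⌈log₂ k⌉ and p = 2^{-i}. If A_1, ..., A_k are pairwise independent events each of probability p, then P(A_1 ∪ ... ∪ A_k) > 3/8. -/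
/-!
With `z = k p`, the choice `p = 2^{-⌈log₂ k⌉}` puts `z` in `(1/2, 1]`. The second Bonferroni
inequality gives `P(⋃ A_i) ≥ k p - (k choose 2) p² ≥ z - z²/2 = 1/2 - (1 - z)²/2 > 3/8`.
-/

open MeasureTheory Finset

theorem Nat.pow_clog_lt_mul {b k : ℕ} (hb : 1 < b) (hk : 0 < k) : b ^ clog b k < b * k := by
  rcases h : clog b k with _ | n
  · simpa using Nat.one_lt_mul_iff.2 ⟨by omega, hk, Or.inl hb⟩
  · have hpow : b ^ n < k := pow_lt_of_lt_clog (by omega)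
    rw [pow_succ, mul_comm]
    exact Nat.mul_lt_mul_of_pos_left hpow (by omega)

theorem div_two_pow_clog_mem_Ioc {k : ℕ} (hk : 0 < k) :
    (k : ℝ) / 2 ^ Nat.clog 2 k ∈ Set.Ioc (1 / 2) 1 := by
  have hlt : ((2 ^ Nat.clog 2 k : ℕ) : ℝ) < ((2 * k : ℕ) : ℝ) :=
    Nat.cast_lt.2 (Nat.pow_clog_lt_mul one_lt_two hk)
  have hle : (k : ℝ) ≤ ((2 ^ Nat.clog 2 k : ℕ) : ℝ) :=
    Nat.cast_le.2 (Nat.le_pow_clog one_lt_two k)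
  push_cast at hlt hle
  constructor
  · rw [lt_div_iff₀ (by positivity)]
    linarith
  · rwa [div_le_one (by positivity)]

theorem three_eighths_lt_mul_sub_choose_two_mul_sq {k : ℕ} {p : ℝ}
    (hlow : 1 / 2 < k * p) (hup : k * p ≤ 1) : 3 / 8 < k * p - k.choose 2 * p ^ 2 := by
  have hpairs : (k.choose 2 : ℝ) * p ^ 2 ≤ (k * p) ^ 2 / 2 := by
    rw [Nat.cast_choose_two]
    nlinarith [sq_nonneg (k * p)]
  nlinarith

theorem card_mul_le_measureReal_biUnion_add_choose_two_mul {ι Ω : Type*} [MeasurableSpace Ω]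
    {μ : Measure Ω} [IsFiniteMeasure μ] {A : ι → Set Ω} {q r : ℝ}
    (hA : ∀ i, MeasurableSet (A i))
    (hq : ∀ i, q ≤ μ.real (A i)) (hr : Pairwise fun i j ↦ μ.real (A i ∩ A j) ≤ r)
    (s : Finset ι) : #s * q ≤ μ.real (⋃ i ∈ s, A i) + (#s).choose 2 * r := by
  classical
  induction s using Finset.induction_on with
  | empty => simp
  | @insert a s ha ih =>
    have hinter : μ.real (A a ∩ ⋃ i ∈ s, A i) ≤ #s * r := by
      rw [Set.inter_iUnion₂]
      calc μ.real (⋃ i ∈ s, A a ∩ A i) ≤ ∑ i ∈ s, μ.real (A a ∩ A i) :=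
            measureReal_biUnion_finset_le s _
        _ ≤ ∑ _i ∈ s, r := sum_le_sum fun i hi ↦ hr (ne_of_mem_of_not_mem hi ha).symm
        _ = #s * r := by rw [sum_const, nsmul_eq_mul]
    have hsplit := measureReal_union_add_inter' (μ := μ) (hA a)
      (h₂ := measure_ne_top μ (⋃ i ∈ s, A i))
    rw [card_insert_of_notMem ha, set_biUnion_insert, Nat.choose_succ_succ',
      Nat.choose_one_right]
    push_cast
    linarith [hq a]

/-- let `k ≥ 1`, `i = ⌈log₂ k⌉` and `p = 2^{-i}`. If `A_1, ..., A_k`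
are pairwise independent events each of probability `p`, then
`P(A_1 ∪ ... ∪ A_k) > 3/8`. -/
theorem stmt_11 {Ω : Type*} [MeasurableSpace Ω] (P : Measure Ω)
    [IsProbabilityMeasure P] (k : ℕ) (hk : 1 ≤ k) (A : Fin k → Set Ω)
    (hA : ∀ i, MeasurableSet (A i))
    (hp : ∀ i, P (A i) = 2⁻¹ ^ (Nat.clog 2 k))
    (hpair : ∀ i j, i ≠ j → P (A i ∩ A j) = ((2 : ENNReal)⁻¹ ^ (Nat.clog 2 k)) ^ 2) :
    3 / 8 < P (⋃ i, A i) := by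
  set p : ℝ := 2⁻¹ ^ Nat.clog 2 k
  have hp_real : ∀ i, P.real (A i) = p := fun i ↦ by simp [measureReal_def, hp, p]
  have hpair_real : Pairwise fun i j ↦ P.real (A i ∩ A j) = p ^ 2 :=
    fun i j hij ↦ by simp [measureReal_def, hpair i j hij, p]
  have hbonf := card_mul_le_measureReal_biUnion_add_choose_two_mul hA (fun i ↦ (hp_real i).ge)
    (fun i j hij ↦ (hpair_real hij).le) univ
  have hz : (k : ℝ) * p ∈ Set.Ioc (1 / 2) 1 := by
    simpa [p, inv_pow, div_eq_mul_inv] using div_two_pow_clog_mem_Ioc hk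
  have hnum := three_eighths_lt_mul_sub_choose_two_mul_sq hz.1 hz.2
  simp only [card_univ, Fintype.card_fin, mem_univ, Set.iUnion_true] at hbonf
  have hunion : 3 / 8 < P.real (⋃ i, A i) := by linarith
  rw [← ofReal_measureReal, ENNReal.lt_ofReal_iff_toReal_lt (by simp [ENNReal.div_eq_top])]
  simpa using hunion
end
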